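/- arXiv:2503.05688 — 2 statements merged into one kernel-verified Lean document; each statement's English description precedes it below -/
import Mathlib

section
/- Let P be a portrait, let 𝒯 be a B-marked stable tree, and let e be an edge of 𝒯 with half-edges h and h′. Then the B-marked tree 𝒯′ obtained by contracting e is again a B-marked stable tree, and for any P-decoration (ord, mon, cyc) of 𝒯, the induced triple (ord′, mon′, cyc′) on 𝒯′ is a P-decoration of 𝒯′ (it satisfies conditions (i)–(v)). -/
open scoped Classical

/-- A `B`-marked graph (with legs), in the half-edge formalism: a finite set `H` of
half-edges, a finite set `V` of vertices, an attachment map `base`, an involution `pair`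
whose 2-element orbits are the edges and whose fixed points are the legs, and a labelling
of the legs by `B`. -/
structure BMarkedGraph (B : Type) : Type 1 where
  /-- the half-edges -/
  H : Type
  /-- the vertices -/
  V : Type
  [fintH : Fintype H]
  [decH : DecidableEq H]
  [fintV : Fintype V]
  [decV : DecidableEq V]
  /-- the vertex a half-edge is attached to -/
  base : H → V
  /-- the edge-pairing involution; legs are exactly its fixed points -/
  pair : H → H
  pair_invol : ∀ h, pair (pair h) = h
  /-- the labelling of the legs by `B` -/
  leg : B → H
  leg_inj : Function.Injective leg
  pair_leg : ∀ b, pair (leg b) = leg b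
  leg_of_fixed : ∀ h, pair h = h → ∃ b, leg b = h

attribute [instance] BMarkedGraph.fintH BMarkedGraph.decH BMarkedGraph.fintV BMarkedGraph.decV

namespace BMarkedGraph

variable {B : Type} (T : BMarkedGraph B)

/-- Two vertices are adjacent if some edge joins them. -/
def Adj (v w : T.V) : Prop :=
  ∃ h, T.pair h ≠ h ∧ T.base h = v ∧ T.base (T.pair h) = w

/-- A `B`-marked graph is a stable tree if it has no self-loops, is connected, has exactly
one fewer edge than it has vertices (so that it is a tree), and every vertex has total
valence (incident edge half-edges plus legs) at least three. -/
def IsStableTree : Prop :=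
  (∀ h, T.pair h ≠ h → T.base (T.pair h) ≠ T.base h) ∧
  (∀ v w : T.V, Relation.ReflTransGen T.Adj v w) ∧
  (Fintype.card {h : T.H // T.pair h ≠ h} + 2 = 2 * Fintype.card T.V) ∧
  (∀ v : T.V, 3 ≤ Fintype.card {h : T.H // T.base h = v})

/-- Adjacency avoiding the vertex `v`. -/
def AdjAvoid (v x y : T.V) : Prop := x ≠ v ∧ y ≠ v ∧ T.Adj x y

/-- `T.InSide h k` says that the half-edge `k` lies in the connected component of
`T ∖ {base h}` containing `h`: either `k = h`, or `h` belongs to an edge and the base of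
`k` is reachable from the other endpoint of that edge without passing through `base h`. -/
def InSide (h k : T.H) : Prop :=
  k = h ∨ (T.pair h ≠ h ∧ k ≠ h ∧
    Relation.ReflTransGen (T.AdjAvoid (T.base h)) (T.base (T.pair h)) (T.base k))

end BMarkedGraph

/-- A portrait `P = (g, d, B, A, φ, br, rm)`: the combinatorial data prescribing the
branching behaviour of the branched covers under consideration.  Here `br b` is a
partition of `d` recorded as a multiset of positive parts summing to `d`. -/
structure Portrait (B A : Type) [Fintype B] [DecidableEq B] [Fintype A] [DecidableEq A] where
  /-- the source genus -/
  g : ℕ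
  /-- the degree -/
  d : ℕ
  d_pos : 1 ≤ d
  card_B : 3 ≤ Fintype.card B
  card_A : (2 : ℤ) - 2 * (g : ℤ) - (Fintype.card A : ℤ) < 0
  /-- the function on the source marks -/
  phi : A → B
  /-- the branch profiles of the target marks: partitions of `d` -/
  br : B → Multiset ℕ
  /-- the ramifications (local degrees) at the source marks -/
  rm : A → ℕ
  rm_pos : ∀ a, 1 ≤ rm a
  br_pos : ∀ b, ∀ n ∈ br b, 1 ≤ n
  br_sum : ∀ b, (br b).sum = d
  /-- the Riemann–Hurwitz formula -/
  riemannHurwitz :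
    (∑ b : B, ((d : ℤ) - ((br b).card : ℤ))) - 2 * (g : ℤ) = 2 * (d : ℤ) - 2
  /-- for each `b ∈ B`, `(rm a)_{a ∈ φ⁻¹ b}` is a sub-multiset of `br b` -/
  rm_sub : ∀ b : B, (Finset.univ.filter fun a => phi a = b).val.map rm ≤ br b

variable {B A : Type} [Fintype B] [DecidableEq B] [Fintype A] [DecidableEq A]

/-- The raw data `(ord, mon, cyc)` of a `P`-decoration of the `B`-marked graph `T`.
A cycle of a leg permutation is recorded by one of its points, so `cyc : A → Fin P.d`
sends `a` to a point of the cycle `cyc(a)` of `mon(φ a)`. -/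
structure PreDecoration (P : Portrait B A) (T : BMarkedGraph B) where
  /-- the cyclic orderings of the half-edges around the vertices -/
  ord : Equiv.Perm T.H
  /-- the permutation attached to each half-edge -/
  mon : T.H → Equiv.Perm (Fin P.d)
  /-- a point of the cycle labelled by each source mark -/
  cyc : A → Fin P.d

/-- `prodAlong ord mon h n = mon (ord^(n-1) h) * ⋯ * mon (ord h) * mon h`: the
right-to-left product of the permutations along `n` successive half-edges of the
`ord`-cycle starting at `h`. -/
def prodAlong {H : Type} {d : ℕ} (ord : Equiv.Perm H) (mon : H → Equiv.Perm (Fin d)) :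
    H → ℕ → Equiv.Perm (Fin d)
  | _, 0 => 1
  | h, n + 1 => prodAlong ord mon (ord h) n * mon h

/-- `(ord, mon, cyc)` is a `P`-decoration of `T`:  `ord` preserves the vertices and has
exactly one cycle for each vertex, consisting of all the half-edges incident with it;
(i) the cyclic product of the permutations around each vertex is the identity;
(ii) the permutations on the two half-edges of an edge are inverse;
(iii) each leg permutation `mon (leg b)` has cycle type `br b` (as a partition of `d`,
  fixed points included);
(iv) `cyc` is injective into the disjoint union of the cycles of the leg permutations,
  and the cycle of `mon (leg (φ a))` through `cyc a` has length `rm a`;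
(v) the leg permutations generate a transitive subgroup of `S_d`. -/
def IsDecoration (P : Portrait B A) (T : BMarkedGraph B) (D : PreDecoration P T) : Prop :=
  (∀ h, T.base (D.ord h) = T.base h) ∧
  (∀ h k, T.base h = T.base k → ∃ n : ℕ, (D.ord ^ n) h = k) ∧
  (∀ h (n : ℕ), (D.ord ^ n) h = h → prodAlong D.ord D.mon h n = 1) ∧
  (∀ h, T.pair h ≠ h → D.mon (T.pair h) = (D.mon h)⁻¹) ∧
  (∀ b, (Equiv.Perm.partition (D.mon (T.leg b))).parts = P.br b) ∧
  (∀ a a', P.phi a = P.phi a' →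
    (D.mon (T.leg (P.phi a))).SameCycle (D.cyc a) (D.cyc a') → a = a') ∧
  (∀ a, Function.minimalPeriod (⇑(D.mon (T.leg (P.phi a)))) (D.cyc a) = P.rm a) ∧
  (∀ i j : Fin P.d, ∃ π ∈ Subgroup.closure (Set.range fun b => D.mon (T.leg b)), π i = j)

/-- Global conjugation of a decoration by `τ ∈ S_d`. -/
def globalConj {P : Portrait B A} {T : BMarkedGraph B} (τ : Equiv.Perm (Fin P.d))
    (D : PreDecoration P T) : PreDecoration P T where
  ord := D.ord
  mon := fun h => τ * D.mon h * τ⁻¹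
  cyc := fun a => τ (D.cyc a)

/-- The anticlockwise braid move at the half-edge `h`: with `h̃ = ord h`, the half-edge
`h` is shifted one step anticlockwise through `h̃`, and the permutations and cycle labels
on the component of `T ∖ {base h}` containing `h` are conjugated by `mon h̃`. -/
noncomputable def braidACW {P : Portrait B A} {T : BMarkedGraph B}
    (D : PreDecoration P T) (h : T.H) : PreDecoration P T where
  ord := Equiv.swap h (D.ord h) * D.ord * (Equiv.swap h (D.ord h))⁻¹
  mon := fun k =>
    if T.InSide h k then D.mon (D.ord h) * D.mon k * (D.mon (D.ord h))⁻¹ else D.mon k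
  cyc := fun a =>
    if T.InSide h (T.leg (P.phi a)) then D.mon (D.ord h) (D.cyc a) else D.cyc a

/-- The clockwise braid move at the half-edge `h`: with `h̃ = ord⁻¹ h`, the half-edge
`h` is shifted one step clockwise through `h̃`, and the permutations and cycle labels
on the component of `T ∖ {base h}` containing `h` are conjugated by `(mon h̃)⁻¹`. -/
noncomputable def braidCW {P : Portrait B A} {T : BMarkedGraph B}
    (D : PreDecoration P T) (h : T.H) : PreDecoration P T where
  ord := Equiv.swap h (D.ord⁻¹ h) * D.ord * (Equiv.swap h (D.ord⁻¹ h))⁻¹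
  mon := fun k =>
    if T.InSide h k then (D.mon (D.ord⁻¹ h))⁻¹ * D.mon k * D.mon (D.ord⁻¹ h) else D.mon k
  cyc := fun a =>
    if T.InSide h (T.leg (P.phi a)) then (D.mon (D.ord⁻¹ h))⁻¹ (D.cyc a) else D.cyc a
/-- Witness data exhibiting the `B`-marked graph `T'` as the contraction of `T` along the
edge `{h₀, pair h₀}`: the half-edges of `T'` are identified (by `q`, compatibly with the
pairing and the leg labels) with those of `T` other than `h₀` and `pair h₀`, and the
vertices of `T'` are identified (by `p`) with those of `T` with the two endpoints of the
contracted edge merged. -/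
structure ContractionData {B : Type} (T T' : BMarkedGraph B) (h₀ : T.H) where
  edge : T.pair h₀ ≠ h₀
  q : T'.H → T.H
  q_inj : Function.Injective q
  q_range : Set.range q = {k : T.H | k ≠ h₀ ∧ k ≠ T.pair h₀}
  q_pair : ∀ k, q (T'.pair k) = T.pair (q k)
  q_leg : ∀ b, q (T'.leg b) = T.leg b
  p : T.V → T'.V
  p_surj : Function.Surjective p
  p_eq_iff : ∀ v w, p v = p w ↔
    (v = w ∨ ({v, w} : Set T.V) = {T.base h₀, T.base (T.pair h₀)})
  p_base : ∀ k, T'.base k = p (T.base (q k))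

/-- `D'` is the decoration of the contracted tree `T'` induced by the decoration `D` of
`T`: `mon` and `cyc` are the restrictions of those of `D`, and the two `ord`-cycles at the
endpoints of the contracted edge are merged:
 `(h₀ h₁ … h_k)(h₀' h₁' … h_l') ↦ (h₁ … h_k h₁' … h_l')` where `h₀' = pair h₀`. -/
def IsContractedDecoration {P : Portrait B A} {T T' : BMarkedGraph B} {h₀ : T.H}
    (c : ContractionData T T' h₀) (D : PreDecoration P T) (D' : PreDecoration P T') :
    Prop :=
  (∀ k, D'.mon k = D.mon (c.q k)) ∧
  (∀ a, D'.cyc a = D.cyc a) ∧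
  (∀ k, c.q (D'.ord k) =
    if D.ord (c.q k) = h₀ then D.ord (T.pair h₀)
    else if D.ord (c.q k) = T.pair h₀ then D.ord h₀
    else D.ord (c.q k))

/-!
Contracting an edge `h₀` of a stable tree merges its two endpoints into one vertex of valence
at least `3 + 3 - 2`, and removes one vertex and one edge, so the count `#E = #V - 1` survives.
The only danger is a new self-loop, i.e. an edge parallel to `h₀`; but deleting such an edge
would leave a connected graph with `#V - 2` edges.

On decorations, the new cyclic order is `ord` multiplied by the transposition of `h₀` and
`pair h₀` (which merges their two cycles, as the endpoints are distinct), with `h₀` and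
`pair h₀` then deleted. Condition (i) says exactly that `mon` is a coboundary,
`mon h = Φ (ord h) * (Φ h)⁻¹`; correcting `Φ` on the cycle of `pair h₀` by a constant gives a
potential for the merged cycle, thanks to `mon (pair h₀) = (mon h₀)⁻¹`. The remaining
conditions only see `mon` and `cyc` on the surviving half-edges, which are unchanged.
-/

open Equiv Function

section Potential

variable {H : Type} {d : ℕ} (ord : Perm H) (mon : H → Perm (Fin d))

theorem prodAlong_add (m n : ℕ) (h : H) :
    prodAlong ord mon h (m + n) = prodAlong ord mon ((ord ^ m) h) n * prodAlong ord mon h m := by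
  induction m generalizing h with
  | zero => simp [prodAlong]
  | succ m ih =>
    rw [Nat.add_right_comm, prodAlong, ih, pow_succ, Perm.mul_apply, prodAlong, mul_assoc]

theorem prodAlong_succ' (h : H) (n : ℕ) :
    prodAlong ord mon h (n + 1) = mon ((ord ^ n) h) * prodAlong ord mon h n := by
  rw [prodAlong_add]
  simp [prodAlong]

variable {ord mon}

theorem prodAlong_congr_of_pow_eq
    (hprod : ∀ h n, (ord ^ n) h = h → prodAlong ord mon h n = 1)
    {h : H} {m n : ℕ} (he : (ord ^ m) h = (ord ^ n) h) :
    prodAlong ord mon h m = prodAlong ord mon h n := by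
  wlog hle : m ≤ n generalizing m n
  · exact (this he.symm (by omega)).symm
  obtain ⟨t, rfl⟩ := Nat.exists_eq_add_of_le hle
  rw [prodAlong_add, hprod _ t (by rw [← Perm.mul_apply, ← pow_add, add_comm, ← he]), one_mul]

theorem prodAlong_eq_of_potential {Φ : H → Perm (Fin d)}
    (hΦ : ∀ h, mon h = Φ (ord h) * (Φ h)⁻¹) (h : H) (n : ℕ) :
    prodAlong ord mon h n = Φ ((ord ^ n) h) * (Φ h)⁻¹ := by
  induction n with
  | zero => simp [prodAlong]
  | succ n ih =>
    rw [prodAlong_succ', ih, hΦ, ← Perm.mul_apply, ← pow_succ', mul_assoc, inv_mul_cancel_left]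

theorem forall_prodAlong_eq_one_iff_exists_potential [Finite H] :
    (∀ h n, (ord ^ n) h = h → prodAlong ord mon h n = 1) ↔
      ∃ Φ : H → Perm (Fin d), ∀ h, mon h = Φ (ord h) * (Φ h)⁻¹ := by
  constructor
  · intro hprod
    let r : H → H := fun x => (Quotient.mk (Perm.SameCycle.setoid ord) x).out
    have hr : ∀ x, ord.SameCycle (r x) x := fun x =>
      Quotient.mk_out (s := Perm.SameCycle.setoid ord) x
    have hr_apply : ∀ x, r (ord x) = r x := fun x =>
      congrArg Quotient.out (Quotient.sound (Perm.sameCycle_apply_left.2 (Perm.SameCycle.refl _ x)))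
    choose n hn using fun x => (hr x).exists_nat_pow_eq
    refine ⟨fun x => prodAlong ord mon (r x) (n x), fun x => ?_⟩
    rw [eq_mul_inv_iff_mul_eq]
    have key : (ord ^ n (ord x)) (r x) = (ord ^ (n x + 1)) (r x) := by
      rw [pow_succ', Perm.mul_apply, hn x, ← hr_apply x]
      exact hn (ord x)
    dsimp only
    rw [hr_apply, prodAlong_congr_of_pow_eq hprod key, prodAlong_succ', hn]
  · rintro ⟨Φ, hΦ⟩ h n hn
    rw [prodAlong_eq_of_potential hΦ, hn, mul_inv_cancel]

end Potential

section MergeCycles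

variable {α : Type*}

/-- The successor function of `σ * swap a b` (which merges the cycles through `a` and `b`)
with `a` and `b` deleted. -/
def mergeNext [DecidableEq α] (σ : Perm α) (a b : α) (x : α) : α :=
  if σ x = a then σ b else if σ x = b then σ a else σ x

variable [DecidableEq α] {σ : Perm α} {a b : α}

theorem mergeNext_of_ne {x : α} (ha : σ x ≠ a) (hb : σ x ≠ b) : mergeNext σ a b x = σ x := by
  simp [mergeNext, ha, hb]

theorem mergeNext_comm : mergeNext σ a b = mergeNext σ b a := by
  ext x
  unfold mergeNext
  split_ifs <;> simp_all

theorem mergeNext_injOn (hab : a ≠ b) : Set.InjOn (mergeNext σ a b) {x | x ≠ a ∧ x ≠ b} := by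
  rintro x ⟨hxa, hxb⟩ y ⟨hya, hyb⟩ hxy
  apply σ.injective
  unfold mergeNext at hxy
  split_ifs at hxy <;> simp_all

theorem mergeNext_ne (ha : σ a ≠ a) (hb : σ b ≠ b) (hab : ¬ σ.SameCycle a b) (x : α) :
    mergeNext σ a b x ≠ a ∧ mergeNext σ a b x ≠ b := by
  have hab' : σ a ≠ b := fun h => hab (h ▸ Perm.sameCycle_apply_right.2 (.refl σ a))
  have hba : σ b ≠ a := fun h => hab (h ▸ Perm.sameCycle_apply_left.2 (.refl σ b))
  unfold mergeNext
  split_ifs <;> simp_all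

/-- `Φ` is kept off the cycle of `b` and multiplied on it by the constant
`(Φ b)⁻¹ * mon a * Φ a`, which glues the two cycles at `a` and `b`. -/
theorem exists_potential_mergeNext {G : Type*} [Group G] {mon Φ : α → G}
    (hΦ : ∀ x, mon x = Φ (σ x) * (Φ x)⁻¹) (hmon : mon b = (mon a)⁻¹)
    (hab : ¬ σ.SameCycle a b) :
    ∃ Φ' : α → G, ∀ x, mon x = Φ' (mergeNext σ a b x) * (Φ' x)⁻¹ := by
  refine ⟨fun x => if σ.SameCycle x b then Φ x * ((Φ b)⁻¹ * mon a * Φ a) else Φ x, fun x => ?_⟩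
  have hmon' : mon a = (mon b)⁻¹ := by rw [hmon, inv_inv]
  by_cases hxa : σ x = a
  · have hxb : ¬ σ.SameCycle x b := fun h => hab (hxa ▸ Perm.sameCycle_apply_left.2 h)
    simp only [mergeNext, if_pos hxa, Perm.sameCycle_apply_left, Perm.SameCycle.refl, if_true,
      if_neg hxb]
    rw [hΦ x, hxa, hmon', hΦ b]
    group
  by_cases hxb : σ x = b
  · have hxb' : σ.SameCycle x b := hxb ▸ Perm.sameCycle_apply_right.2 (.refl σ x)
    have hab' : ¬ σ.SameCycle (σ a) b := fun h => hab (Perm.sameCycle_apply_left.1 h)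
    simp only [mergeNext, if_neg hxa, if_pos hxb, if_neg hab', if_pos hxb']
    rw [hΦ x, hxb, hΦ a]
    group
  · simp only [mergeNext, if_neg hxa, if_neg hxb, Perm.sameCycle_apply_left]
    split_ifs
    · rw [hΦ x]
      group
    · exact hΦ x

variable {α' : Type*} {σ' : Perm α'} {q : α' → α}

theorem exists_perm_mergeNext [Finite α'] (hq : Injective q)
    (hrange : Set.range q = {x | x ≠ a ∧ x ≠ b}) (ha : σ a ≠ a) (hb : σ b ≠ b)
    (hab : ¬ σ.SameCycle a b) :
    ∃ σ' : Perm α', ∀ k, q (σ' k) = mergeNext σ a b (q k) := by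
  have hne : a ≠ b := by
    rintro rfl
    exact hab (.refl σ a)
  choose f hf using fun k => (Set.ext_iff.1 hrange _).2 (mergeNext_ne ha hb hab (q k))
  have hf_inj : Injective f := fun k l hkl =>
    hq (mergeNext_injOn hne ((Set.ext_iff.1 hrange _).1 ⟨k, rfl⟩)
      ((Set.ext_iff.1 hrange _).1 ⟨l, rfl⟩) (by rw [← hf, ← hf, hkl]))
  exact ⟨Equiv.ofBijective f (Finite.injective_iff_bijective.1 hf_inj), hf⟩

theorem sameCycle_of_sameCycle_of_mergeNext [Finite α] (hq : Injective q)
    (hrange : Set.range q = {x | x ≠ a ∧ x ≠ b}) (hσ' : ∀ k, q (σ' k) = mergeNext σ a b (q k))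
    (hab : ¬ σ.SameCycle a b) {kₐ : α'} (hkₐ : q kₐ = σ a) {k : α'}
    (hk : σ.SameCycle (q k) a) : σ'.SameCycle k kₐ := by
  obtain ⟨n, hn⟩ := hk.symm.exists_nat_pow_eq
  clear hk
  induction n generalizing k with
  | zero => exact absurd hn.symm ((Set.ext_iff.1 hrange _).1 ⟨k, rfl⟩).1
  | succ n ih =>
    by_cases hy : (σ ^ n) a = a
    · rw [pow_succ', Perm.mul_apply, hy, ← hkₐ] at hn
      rw [hq hn.symm]
    have hyb : (σ ^ n) a ≠ b := fun h => hab (h ▸ Perm.sameCycle_pow_right.2 (.refl σ a))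
    obtain ⟨ky, hky⟩ := (Set.ext_iff.1 hrange _).2 ⟨hy, hyb⟩
    have hqk := (Set.ext_iff.1 hrange _).1 ⟨k, rfl⟩
    rw [pow_succ', Perm.mul_apply] at hn
    have hstep : σ' ky = k :=
      hq (by rw [hσ', hky, mergeNext_of_ne] <;> rw [hn]; exacts [hqk.1, hqk.2])
    exact hstep ▸ Perm.sameCycle_apply_left.2 (ih hky.symm)

theorem sameCycle_of_not_sameCycle_of_mergeNext [Finite α] (hq : Injective q)
    (hσ' : ∀ k, q (σ' k) = mergeNext σ a b (q k)) {k l : α'}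
    (hka : ¬ σ.SameCycle (q k) a) (hkb : ¬ σ.SameCycle (q k) b)
    (hkl : σ.SameCycle (q k) (q l)) : σ'.SameCycle k l := by
  have hsc : ∀ n : ℕ, σ.SameCycle (q k) (σ ((σ ^ n) (q k))) := fun n =>
    Perm.sameCycle_apply_right.2 (Perm.sameCycle_pow_right.2 (.refl σ _))
  have hne : ∀ n : ℕ, σ ((σ ^ n) (q k)) ≠ a ∧ σ ((σ ^ n) (q k)) ≠ b := fun n =>
    ⟨fun h => hka (h ▸ hsc n), fun h => hkb (h ▸ hsc n)⟩
  have hpow : ∀ n : ℕ, q ((σ' ^ n) k) = (σ ^ n) (q k) := by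
    intro n
    induction n with
    | zero => rfl
    | succ n ih =>
      rw [pow_succ', Perm.mul_apply, hσ', ih, mergeNext_of_ne (hne n).1 (hne n).2,
        ← Perm.mul_apply, ← pow_succ']
  obtain ⟨n, hn⟩ := hkl.exists_nat_pow_eq
  exact ⟨n, hq (by rw [zpow_natCast, hpow, hn])⟩

theorem sameCycle_of_mergeNext [Finite α] (hq : Injective q)
    (hrange : Set.range q = {x | x ≠ a ∧ x ≠ b}) (hσ' : ∀ k, q (σ' k) = mergeNext σ a b (q k))
    (ha : σ a ≠ a) (hb : σ b ≠ b) (hab : ¬ σ.SameCycle a b) {k l : α'}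
    (h : σ.SameCycle (q k) (q l) ∨ ((σ.SameCycle (q k) a ∨ σ.SameCycle (q k) b) ∧
      (σ.SameCycle (q l) a ∨ σ.SameCycle (q l) b))) :
    σ'.SameCycle k l := by
  have hab' : σ a ≠ b := fun h => hab (h ▸ Perm.sameCycle_apply_right.2 (.refl σ a))
  have hba : σ b ≠ a := fun h => hab (h ▸ Perm.sameCycle_apply_left.2 (.refl σ b))
  obtain ⟨kₐ, hkₐ⟩ := (Set.ext_iff.1 hrange _).2 ⟨ha, hab'⟩
  obtain ⟨k_b, hk_b⟩ := (Set.ext_iff.1 hrange _).2 ⟨hba, hb⟩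
  have hlink : σ'.SameCycle k_b kₐ := by
    have hza : σ.symm a ≠ a := fun h => ha (by rw [← h, σ.apply_symm_apply, h])
    have hzb : σ.symm a ≠ b := fun h => hba (by rw [← h, σ.apply_symm_apply])
    obtain ⟨kz, hkz⟩ := (Set.ext_iff.1 hrange _).2 ⟨hza, hzb⟩
    have hstep : σ' kz = k_b :=
      hq (by rw [hσ', hkz, mergeNext, if_pos (σ.apply_symm_apply a), hk_b])
    exact hstep ▸ Perm.sameCycle_apply_left.2 (sameCycle_of_sameCycle_of_mergeNext hq hrange hσ'
      hab hkₐ (hkz ▸ Perm.sameCycle_symm_apply_left.2 (.refl σ a)))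
  have hmerged : ∀ k, (σ.SameCycle (q k) a ∨ σ.SameCycle (q k) b) → σ'.SameCycle k kₐ := by
    rintro k (h | h)
    · exact sameCycle_of_sameCycle_of_mergeNext hq hrange hσ' hab hkₐ h
    · exact (sameCycle_of_sameCycle_of_mergeNext hq (hrange.trans (Set.ext fun _ => and_comm))
        (fun k => (hσ' k).trans (by rw [mergeNext_comm])) (hab ∘ .symm) hk_b h).trans hlink
  by_cases hk : σ.SameCycle (q k) a ∨ σ.SameCycle (q k) b
  · have hl : σ.SameCycle (q l) a ∨ σ.SameCycle (q l) b := by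
      rcases h with h | ⟨-, hl⟩
      · exact hk.imp h.symm.trans h.symm.trans
      · exact hl
    exact (hmerged k hk).trans (hmerged l hl).symm
  · rw [not_or] at hk
    rcases h with h | ⟨h, -⟩
    · exact sameCycle_of_not_sameCycle_of_mergeNext hq hσ' hk.1 hk.2 h
    · exact absurd h (by tauto)

end MergeCycles

theorem two_mul_card_le_card_add_two {H V : Type*} [Finite V] (base : H → V) {pr : H → H} (hpr : Involutive pr)
    (E : Finset H) (hE : ∀ h ∈ E, pr h ∈ E)
    (hconn : ∀ v w, Relation.ReflTransGen (fun v w => ∃ h ∈ E, base h = v ∧ base (pr h) = w) v w) :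
    2 * Nat.card V ≤ E.card + 2 := by
  rcases isEmpty_or_nonempty V with hV | hV
  · simp
  let G := SimpleGraph.fromRel fun v w => ∃ h ∈ E, base h = v ∧ base (pr h) = w
  have hG : G.Connected := by
    refine ⟨fun v w => (SimpleGraph.reachable_iff_reflTransGen v w).2 ?_⟩
    refine Relation.ReflTransGen.lift' id (fun x y hxy => ?_) _ _ (hconn v w)
    by_cases hxy' : x = y
    · exact hxy' ▸ .refl
    · exact .single ((SimpleGraph.fromRel_adj _ x y).2 ⟨hxy', .inl hxy⟩)
  have hedge : ∀ e : G.edgeSet, ∃ h : E, s(base h, base (pr h)) = e := by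
    rintro ⟨e, he⟩
    induction e using Sym2.ind with
    | _ v w =>
      obtain ⟨-, ⟨h, hh, rfl, rfl⟩ | ⟨h, hh, rfl, rfl⟩⟩ :=
        (SimpleGraph.fromRel_adj _ _ _).1 ((G.mem_edgeSet).1 he)
      exacts [⟨⟨h, hh⟩, rfl⟩, ⟨⟨h, hh⟩, Sym2.eq_swap⟩]
  choose f hf using hedge
  have hf_inj : Injective f := fun e e' hee' => Subtype.ext (by rw [← hf, ← hf, hee'])
  have hF : Injective (Sum.elim f fun e => ⟨pr (f e), hE _ (f e).2⟩) := by
    refine hf_inj.sumElim (fun e e' hee' => hf_inj (Subtype.ext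
      (hpr.injective (congrArg Subtype.val hee')))) fun e e' hee' => ?_
    have hval : (f e : H) = pr (f e') := congrArg Subtype.val hee'
    have hee : e = e' := Subtype.ext (by rw [← hf, ← hf, hval, hpr, Sym2.eq_swap])
    subst hee
    have hadj : G.Adj (base (f e)) (base (pr (f e))) := by
      rw [← SimpleGraph.mem_edgeSet, hf]
      exact e.2
    exact hadj.ne (congrArg base hval)
  have hcard := Nat.card_le_card_of_injective _ hF
  rw [Nat.card_sum, Nat.card_eq_fintype_card (α := E), Fintype.card_coe] at hcard
  have := hG.card_vert_le_card_edgeSet_add_one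
  omega

namespace BMarkedGraph

variable {B : Type} (T : BMarkedGraph B)

theorem pair_involutive : Involutive T.pair := T.pair_invol

/-- Otherwise deleting the parallel edge `x` would leave a connected graph with `#V - 2` edges. -/
theorem eq_or_eq_pair_of_parallel (hconn : ∀ v w : T.V, Relation.ReflTransGen T.Adj v w)
    (hcount : Fintype.card {h : T.H // T.pair h ≠ h} + 2 = 2 * Fintype.card T.V)
    {h₀ x : T.H} (hEdge : T.pair h₀ ≠ h₀) (hx : T.pair x ≠ x)
    (hpar : ({T.base x, T.base (T.pair x)} : Set T.V) = {T.base h₀, T.base (T.pair h₀)}) :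
    x = h₀ ∨ x = T.pair h₀ := by
  by_contra hne
  rw [not_or] at hne
  have hne' : T.pair x ≠ h₀ ∧ T.pair x ≠ T.pair h₀ :=
    ⟨fun h => hne.2 (by rw [← h, T.pair_invol]), fun h => hne.1 (T.pair_involutive.injective h)⟩
  let E := Finset.univ.filter (fun h => T.pair h ≠ h) \ {x, T.pair x}
  have hmem : ∀ h, h ∈ E ↔ T.pair h ≠ h ∧ h ≠ x ∧ h ≠ T.pair x := by simp [E]
  have hE : ∀ h ∈ E, T.pair h ∈ E := by
    intro h hh
    rw [hmem] at hh ⊢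
    refine ⟨by rw [T.pair_invol]; exact hh.1.symm, fun e => hh.2.2 ?_, fun e => hh.2.1 ?_⟩
    · rw [← e, T.pair_invol]
    · exact T.pair_involutive.injective e
  have hstep : ∀ v w, T.Adj v w →
      Relation.ReflTransGen (fun v w => ∃ h ∈ E, T.base h = v ∧ T.base (T.pair h) = w) v w := by
    rintro v w ⟨h, hh, rfl, rfl⟩
    by_cases hx' : h = x ∨ h = T.pair x
    · have hpar' : ({T.base h, T.base (T.pair h)} : Set T.V) =
          {T.base h₀, T.base (T.pair h₀)} := by
        rcases hx' with rfl | rfl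
        · exact hpar
        · rw [T.pair_invol, Set.pair_comm, hpar]
      rcases Set.pair_eq_pair_iff.1 hpar' with ⟨e₁, e₂⟩ | ⟨e₁, e₂⟩
      · exact .single ⟨h₀, (hmem _).2 ⟨hEdge, Ne.symm hne.1, Ne.symm hne'.1⟩, e₁.symm, e₂.symm⟩
      · refine .single ⟨T.pair h₀, (hmem _).2 ⟨?_, Ne.symm hne.2, Ne.symm hne'.2⟩, e₁.symm, ?_⟩
        · rw [T.pair_invol]; exact hEdge.symm
        · rw [T.pair_invol, e₂]
    · rw [not_or] at hx'
      exact .single ⟨h, (hmem _).2 ⟨hh, hx'⟩, rfl, rfl⟩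
  have hcard := two_mul_card_le_card_add_two T.base T.pair_involutive E hE
    fun v w => Relation.reflTransGen_closed hstep v w (hconn v w)
  have hsub : {x, T.pair x} ⊆ Finset.univ.filter (fun h => T.pair h ≠ h) := by
    intro h hh
    simp only [Finset.mem_insert, Finset.mem_singleton] at hh
    rcases hh with rfl | rfl <;> simp [T.pair_invol, hx, hx.symm]
  have hE_card : E.card + 2 = Fintype.card {h : T.H // T.pair h ≠ h} := by
    rw [Fintype.card_subtype, ← Finset.card_pair hx.symm]
    exact Finset.card_sdiff_add_card_eq_card hsub
  rw [Nat.card_eq_fintype_card] at hcard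
  omega

variable {h₀ : T.H}

def contractVertex (hb : T.base (T.pair h₀) ≠ T.base h₀) (v : T.V) :
    {v : T.V // v ≠ T.base (T.pair h₀)} :=
  if hv : v = T.base (T.pair h₀) then ⟨T.base h₀, hb.symm⟩ else ⟨v, hv⟩

theorem contractVertex_eq_iff (hb : T.base (T.pair h₀) ≠ T.base h₀) (v w : T.V) :
    T.contractVertex hb v = T.contractVertex hb w ↔
      v = w ∨ ({v, w} : Set T.V) = {T.base h₀, T.base (T.pair h₀)} := by
  rw [Set.pair_eq_pair_iff]
  unfold contractVertex
  split_ifs <;> simp only [Subtype.mk.injEq] <;> grind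

def contract (hEdge : T.pair h₀ ≠ h₀) (hb : T.base (T.pair h₀) ≠ T.base h₀) :
    BMarkedGraph B where
  H := {k : T.H // k ≠ h₀ ∧ k ≠ T.pair h₀}
  V := {v : T.V // v ≠ T.base (T.pair h₀)}
  base k := T.contractVertex hb (T.base k.1)
  pair k := ⟨T.pair k.1, fun h => k.2.2 (T.pair_involutive.eq_iff.1 h),
    fun h => k.2.1 (T.pair_involutive.injective h)⟩
  pair_invol k := Subtype.ext (T.pair_invol k.1)
  leg b := ⟨T.leg b, fun h => hEdge (h ▸ T.pair_leg b),
    fun h => hEdge (by simpa [h, T.pair_invol, eq_comm] using T.pair_leg b)⟩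
  leg_inj _ _ h := T.leg_inj (congrArg Subtype.val h)
  pair_leg b := Subtype.ext (T.pair_leg b)
  leg_of_fixed k hk := (T.leg_of_fixed k.1 (congrArg Subtype.val hk)).imp fun _ => Subtype.ext

def contractionData (hEdge : T.pair h₀ ≠ h₀) (hb : T.base (T.pair h₀) ≠ T.base h₀) :
    ContractionData T (T.contract hEdge hb) h₀ where
  edge := hEdge
  q := Subtype.val
  q_inj := Subtype.val_injective
  q_range := Subtype.range_val
  q_pair _ := rfl
  q_leg _ := rfl
  p := T.contractVertex hb
  p_surj v := ⟨v.1, dif_neg v.2⟩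
  p_eq_iff := T.contractVertex_eq_iff hb
  p_base _ := rfl

end BMarkedGraph

namespace ContractionData

variable {B : Type} {T T' : BMarkedGraph B} {h₀ : T.H} (c : ContractionData T T' h₀)

theorem q_ne (k : T'.H) : c.q k ≠ h₀ ∧ c.q k ≠ T.pair h₀ :=
  (Set.ext_iff.1 c.q_range _).1 ⟨k, rfl⟩

theorem exists_q_eq {x : T.H} (h₁ : x ≠ h₀) (h₂ : x ≠ T.pair h₀) : ∃ k, c.q k = x :=
  (Set.ext_iff.1 c.q_range _).2 ⟨h₁, h₂⟩

theorem pair_ne_iff (k : T'.H) : T'.pair k ≠ k ↔ T.pair (c.q k) ≠ c.q k := by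
  rw [← c.q_pair, c.q_inj.ne_iff]

theorem p_eq_p_iff (v w : T.V) : c.p v = c.p w ↔ v = w ∨
    (v = T.base h₀ ∧ w = T.base (T.pair h₀)) ∨ (v = T.base (T.pair h₀) ∧ w = T.base h₀) := by
  rw [c.p_eq_iff, Set.pair_eq_pair_iff]

theorem p_base_pair : c.p (T.base (T.pair h₀)) = c.p (T.base h₀) :=
  (c.p_eq_iff _ _).2 (.inr (Set.pair_comm _ _))

theorem reflTransGen_adj_p {v w : T.V} (h : Relation.ReflTransGen T.Adj v w) :
    Relation.ReflTransGen T'.Adj (c.p v) (c.p w) := by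
  refine Relation.ReflTransGen.lift' c.p (fun u w ⟨h, hh, hu, hw⟩ => ?_) _ _ h
  by_cases hh' : h = h₀ ∨ h = T.pair h₀
  · have hp : c.p u = c.p w := by
      rcases hh' with rfl | rfl
      · rw [← hu, ← hw, c.p_base_pair]
      · rw [← hu, ← hw, T.pair_invol, c.p_base_pair]
    show Relation.ReflTransGen T'.Adj (c.p u) (c.p w)
    rw [hp]
  · rw [not_or] at hh'
    obtain ⟨k, rfl⟩ := c.exists_q_eq hh'.1 hh'.2
    exact .single ⟨k, (c.pair_ne_iff k).2 hh, by rw [c.p_base, hu], by rw [c.p_base, c.q_pair, hw]⟩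

theorem card_subtype_q (P : T.H → Prop) [DecidablePred P] :
    Nat.card {k : T'.H // P (c.q k)} = (Finset.univ.filter P \ {h₀, T.pair h₀}).card := by
  rw [Nat.card_eq_fintype_card, Fintype.card_subtype, ← Finset.card_image_of_injective _ c.q_inj]
  congr 1
  ext x
  simp only [Finset.mem_image, Finset.mem_filter, Finset.mem_univ, true_and, Finset.mem_sdiff,
    Finset.mem_insert, Finset.mem_singleton, not_or]
  constructor
  · rintro ⟨k, hk, rfl⟩
    exact ⟨hk, c.q_ne k⟩
  · rintro ⟨hx, h₁, h₂⟩
    obtain ⟨k, rfl⟩ := c.exists_q_eq h₁ h₂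
    exact ⟨k, hx, rfl⟩

theorem card_edges_add_two (c : ContractionData T T' h₀) :
    Fintype.card {k : T'.H // T'.pair k ≠ k} + 2 = Fintype.card {h : T.H // T.pair h ≠ h} := by
  have hsub : {h₀, T.pair h₀} ⊆ Finset.univ.filter (fun h => T.pair h ≠ h) := by
    intro h hh
    simp only [Finset.mem_insert, Finset.mem_singleton] at hh
    rcases hh with rfl | rfl <;> simp [T.pair_invol, c.edge, c.edge.symm]
  rw [← Nat.card_eq_fintype_card, Nat.card_congr (Equiv.subtypeEquivRight c.pair_ne_iff),
    c.card_subtype_q fun h => T.pair h ≠ h, Fintype.card_subtype, ← Finset.card_pair c.edge.symm]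
  convert Finset.card_sdiff_add_card_eq_card hsub

theorem card_vertices_add_one (c : ContractionData T T' h₀) (hb : T.base (T.pair h₀) ≠ T.base h₀) :
    Fintype.card T'.V + 1 = Fintype.card T.V := by
  have hbij : Bijective fun v : {v : T.V // v ≠ T.base (T.pair h₀)} => c.p v := by
    refine ⟨fun v w hvw => Subtype.ext ?_, fun v' => ?_⟩
    · have := v.2
      have := w.2
      rcases (c.p_eq_p_iff _ _).1 hvw with h | h | h <;> tauto
    · obtain ⟨v, rfl⟩ := c.p_surj v'
      by_cases hv : v = T.base (T.pair h₀)
      · exact ⟨⟨T.base h₀, hb.symm⟩, by rw [hv, c.p_base_pair]⟩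
      · exact ⟨⟨v, hv⟩, rfl⟩
  rw [← Fintype.card_of_bijective hbij, Fintype.card_subtype_compl, Fintype.card_subtype_eq]
  have : 0 < Fintype.card T.V := Fintype.card_pos_iff.2 ⟨T.base h₀⟩
  omega

theorem three_le_card_base_eq (hb : T.base (T.pair h₀) ≠ T.base h₀)
    (hval : ∀ v : T.V, 3 ≤ Fintype.card {h : T.H // T.base h = v}) (v : T.V) :
    3 ≤ Fintype.card {k : T'.H // T'.base k = c.p v} := by
  simp only [Fintype.card_subtype] at hval
  rw [← Nat.card_eq_fintype_card,
    Nat.card_congr (Equiv.subtypeEquivRight fun k => by rw [c.p_base]),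
    c.card_subtype_q fun h => c.p (T.base h) = c.p v]
  by_cases hv : c.p v = c.p (T.base h₀)
  · have hS : Finset.univ.filter (fun h => c.p (T.base h) = c.p v) =
        Finset.univ.filter (T.base · = T.base h₀) ∪
          Finset.univ.filter (T.base · = T.base (T.pair h₀)) := by
      ext h
      simp only [Finset.mem_filter, Finset.mem_univ, true_and, Finset.mem_union, hv,
        c.p_eq_p_iff]
      tauto
    have hdisj : Disjoint (Finset.univ.filter (T.base · = T.base h₀))
        (Finset.univ.filter (T.base · = T.base (T.pair h₀))) :=
      Finset.disjoint_filter.2 fun h _ e₁ e₂ => hb (e₂.symm.trans e₁)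
    have := Finset.le_card_sdiff {h₀, T.pair h₀}
      (Finset.univ.filter fun h => c.p (T.base h) = c.p v)
    rw [hS, Finset.card_union_of_disjoint hdisj] at this
    rw [hS]
    have := Finset.card_le_two (a := h₀) (b := T.pair h₀)
    have := hval (T.base h₀)
    have := hval (T.base (T.pair h₀))
    omega
  · convert hval v using 2
    ext h
    simp only [Finset.mem_filter, Finset.mem_univ, true_and, Finset.mem_sdiff,
      Finset.mem_insert, Finset.mem_singleton]
    constructor
    · rintro ⟨h', -⟩
      rcases (c.p_eq_p_iff _ _).1 h' with h' | ⟨-, rfl⟩ | ⟨-, rfl⟩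
      exacts [h', absurd c.p_base_pair hv, absurd rfl hv]
    · rintro rfl
      refine ⟨rfl, fun hh => hv ?_⟩
      rcases hh with rfl | rfl
      exacts [rfl, c.p_base_pair]

theorem p_base_mergeNext {ord : Perm T.H} (hbase : ∀ h, T.base (ord h) = T.base h) (x : T.H) :
    c.p (T.base (mergeNext ord h₀ (T.pair h₀) x)) = c.p (T.base x) := by
  rw [mergeNext]
  split_ifs with h₁ h₂
  · rw [hbase, ← hbase x, h₁, c.p_base_pair]
  · rw [hbase, ← hbase x, h₂, c.p_base_pair]
  · rw [hbase]

theorem isStableTree (c : ContractionData T T' h₀) (hT : T.IsStableTree) : T'.IsStableTree := by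
  obtain ⟨hloop, hconn, hcount, hval⟩ := hT
  have hb := hloop h₀ c.edge
  refine ⟨fun k hk heq => ?_, fun v' w' => ?_, ?_, fun v' => ?_⟩
  · rw [c.pair_ne_iff] at hk
    rw [c.p_base, c.p_base, c.q_pair, c.p_eq_iff] at heq
    rcases heq with heq | heq
    · exact hloop _ hk heq
    · rcases T.eq_or_eq_pair_of_parallel hconn hcount c.edge hk (by rw [Set.pair_comm, heq])
        with h | h
      exacts [(c.q_ne k).1 h, (c.q_ne k).2 h]
  · obtain ⟨v, rfl⟩ := c.p_surj v'
    obtain ⟨w, rfl⟩ := c.p_surj w'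
    exact c.reflTransGen_adj_p (hconn v w)
  · have := c.card_edges_add_two
    have := c.card_vertices_add_one hb
    omega
  · obtain ⟨v, rfl⟩ := c.p_surj v'
    exact c.three_le_card_base_eq hb hval v

end ContractionData

section Decoration

variable {P : Portrait B A} {T T' : BMarkedGraph B} {D : PreDecoration P T}

theorem IsDecoration.sameCycle_iff (hD : IsDecoration P T D) {h k : T.H} :
    D.ord.SameCycle h k ↔ T.base h = T.base k := by
  refine ⟨fun hhk => ?_, fun hhk => ?_⟩
  · obtain ⟨n, rfl⟩ := hhk.exists_nat_pow_eq
    clear hhk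
    induction n with
    | zero => rfl
    | succ n ih => rw [pow_succ', Perm.mul_apply, hD.1, ih]
  · obtain ⟨n, hn⟩ := hD.2.1 h k hhk
    exact ⟨n, by rw [zpow_natCast, hn]⟩

theorem IsDecoration.ord_ne_self (hD : IsDecoration P T D) {h : T.H}
    (hval : 1 < Fintype.card {k : T.H // T.base k = T.base h}) : D.ord h ≠ h := by
  intro hfix
  obtain ⟨⟨k, hk⟩, hne⟩ := Fintype.exists_ne_of_one_lt_card hval ⟨h, rfl⟩
  exact hne (Subtype.ext ((hD.sameCycle_iff.2 hk.symm).eq_of_left hfix).symm)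

variable {h₀ : T.H}

theorem ContractionData.exists_isContractedDecoration (c : ContractionData T T' h₀)
    (hT : T.IsStableTree) (hD : IsDecoration P T D) :
    ∃ D' : PreDecoration P T', IsContractedDecoration c D D' := by
  have hfix : ∀ h, D.ord h ≠ h := fun h => hD.ord_ne_self (by linarith [hT.2.2.2 (T.base h)])
  obtain ⟨σ', hσ'⟩ := exists_perm_mergeNext c.q_inj c.q_range (hfix h₀) (hfix (T.pair h₀))
    fun h => hT.1 h₀ c.edge (hD.sameCycle_iff.1 h).symm
  exact ⟨⟨σ', fun k => D.mon (c.q k), D.cyc⟩, fun _ => rfl, fun _ => rfl, hσ'⟩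

theorem ContractionData.isDecoration (c : ContractionData T T' h₀) (hT : T.IsStableTree)
    {D' : PreDecoration P T'} (hD : IsDecoration P T D) (hDD' : IsContractedDecoration c D D') :
    IsDecoration P T' D' := by
  obtain ⟨hmon, hcyc, hord⟩ := hDD'
  have hσ' : ∀ k, c.q (D'.ord k) = mergeNext D.ord h₀ (T.pair h₀) (c.q k) := hord
  have hfix : ∀ h, D.ord h ≠ h := fun h => hD.ord_ne_self (by linarith [hT.2.2.2 (T.base h)])
  have hsc : ∀ {h k}, D.ord.SameCycle h k ↔ T.base h = T.base k := hD.sameCycle_iff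
  have hsep : ¬ D.ord.SameCycle h₀ (T.pair h₀) := fun h => hT.1 h₀ c.edge (hsc.1 h).symm
  obtain ⟨hbase, -, hprod, hinv, hbr, hinj, hrm, htrans⟩ := hD
  refine ⟨fun k => ?_, fun k l hkl => ?_, ?_, fun k hk => ?_, fun b => ?_, fun a a' h => ?_,
    fun a => ?_, ?_⟩
  · rw [c.p_base, c.p_base, hσ', c.p_base_mergeNext hbase]
  · simp only [c.p_base, c.p_eq_p_iff, ← hsc] at hkl
    have hkl' := sameCycle_of_mergeNext c.q_inj c.q_range hσ' (hfix h₀) (hfix (T.pair h₀)) hsep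
      (by tauto)
    exact hkl'.exists_nat_pow_eq
  · obtain ⟨Φ, hΦ⟩ := forall_prodAlong_eq_one_iff_exists_potential.1 hprod
    obtain ⟨Φ', hΦ'⟩ := exists_potential_mergeNext hΦ (hinv h₀ c.edge) hsep
    exact forall_prodAlong_eq_one_iff_exists_potential.2
      ⟨Φ' ∘ c.q, fun k => by rw [hmon, hΦ', ← hσ']; rfl⟩
  · rw [hmon, hmon, c.q_pair]
    exact hinv _ ((c.pair_ne_iff k).1 hk)
  · rw [hmon, c.q_leg]
    exact hbr b
  · rw [hmon, c.q_leg, hcyc, hcyc]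
    exact hinj a a' h
  · rw [hmon, c.q_leg, hcyc]
    exact hrm a
  · simpa only [hmon, c.q_leg] using htrans

end Decoration

/-- Contracting an edge `{h₀, pair h₀}` of a `B`-marked stable tree
yields a `B`-marked stable tree, and any `P`-decoration induces a `P`-decoration of the
contracted tree. -/
theorem contraction_isStableTree_and_isDecoration (P : Portrait B A)
    (T : BMarkedGraph B) (hT : T.IsStableTree) (h₀ : T.H) (hEdge : T.pair h₀ ≠ h₀) :
    (∃ T' : BMarkedGraph B, Nonempty (ContractionData T T' h₀)) ∧
    (∀ (T' : BMarkedGraph B) (c : ContractionData T T' h₀),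
      T'.IsStableTree ∧
      (∀ D : PreDecoration P T, IsDecoration P T D →
        ∃ D' : PreDecoration P T', IsContractedDecoration c D D') ∧
      (∀ (D : PreDecoration P T) (D' : PreDecoration P T'),
        IsDecoration P T D → IsContractedDecoration c D D' →
        IsDecoration P T' D')) :=
  ⟨⟨_, ⟨T.contractionData hEdge (hT.1 h₀ hEdge)⟩⟩, fun _ c =>
    ⟨c.isStableTree hT, fun _ hD => c.exists_isContractedDecoration hT hD,
      fun _ _ hD hDD' => c.isDecoration hT hD hDD'⟩⟩
end

section
/- Let P be a portrait and 𝒯 a B-marked stable tree. A P-decoration of 𝒯 is determined by its cyclic-order datum, its leg permutations and its cycle labelling: if (ord, mon₁, cyc) and (ord, mon₂, cyc) are P-decorations of 𝒯 with mon₁(b) = mon₂(b) for every leg b ∈ B, then mon₁(h) = mon₂(h) for every half-edge h of 𝒯. -/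
/-!
The permutation on a half-edge `h` at a vertex is determined, through the vertex relation (i), by
the permutations on the other half-edges `k` there; those are legs (given) or, by (ii), inverse to
the permutation on `pair k`, which lies on the far side of a different edge. In a tree that far
side is strictly smaller than the side of `h`, so induction on the size of the side closes the
argument. The tree property is given only as a half-edge count, which forces the underlying simple
graph to be a tree and `T` to have no parallel edges.
-/

open scoped Classical

theorem SimpleGraph.reachable_of_reflTransGen {V : Type*} {G : SimpleGraph V}
    {r : V → V → Prop} (hr : ∀ a b, r a b → a ≠ b → G.Adj a b) {x y : V}
    (h : Relation.ReflTransGen r x y) : G.Reachable x y := by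
  induction h with
  | refl => rfl
  | @tail b c _ hbc ih =>
    rcases eq_or_ne b c with rfl | hne
    · exact ih
    · exact ih.trans (hr b c hbc hne).reachable

namespace BMarkedGraph

open Finset

variable {B : Type} {T : BMarkedGraph B}

theorem adj_symm {v w : T.V} : T.Adj v w → T.Adj w v := by
  rintro ⟨m, hm, rfl, rfl⟩
  refine ⟨T.pair m, ?_, rfl, by rw [T.pair_invol]⟩
  rwa [T.pair_invol, ne_comm]

variable (T) in
/-- The simple graph underlying `T`: parallel edges are identified, loops and legs dropped. -/
def toSimpleGraph : SimpleGraph T.V := SimpleGraph.fromRel T.Adj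

theorem toSimpleGraph_adj {v w : T.V} : T.toSimpleGraph.Adj v w ↔ v ≠ w ∧ T.Adj v w := by
  rw [toSimpleGraph, SimpleGraph.fromRel_adj, or_iff_left_of_imp adj_symm]

variable (T) in
def edgeOf (m : T.H) : Sym2 T.V := s(T.base m, T.base (T.pair m))

variable (T) in
def nonLegs : Finset T.H := univ.filter fun m => T.pair m ≠ m

variable (T) in
def carriers (e : Sym2 T.V) : Finset T.H := T.nonLegs.filter (T.edgeOf · = e)

theorem edgeOf_pair (m : T.H) : T.edgeOf (T.pair m) = T.edgeOf m := by
  rw [edgeOf, edgeOf, T.pair_invol, Sym2.eq_swap]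

theorem pair_mem_nonLegs {m : T.H} (hm : m ∈ T.nonLegs) : T.pair m ∈ T.nonLegs := by
  simp only [nonLegs, mem_filter, mem_univ, true_and, T.pair_invol] at hm ⊢
  exact fun h => hm h.symm

theorem pair_subset_carriers {m : T.H} (hm : m ∈ T.nonLegs) :
    {m, T.pair m} ⊆ T.carriers (T.edgeOf m) := by
  simp [carriers, insert_subset_iff, hm, pair_mem_nonLegs hm, edgeOf_pair]

theorem two_le_card_carriers {e : Sym2 T.V} (he : e ∈ T.toSimpleGraph.edgeFinset) :
    2 ≤ #(T.carriers e) := by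
  induction e using Sym2.ind with
  | _ v w =>
    obtain ⟨-, m, hm, rfl, rfl⟩ := toSimpleGraph_adj.mp (SimpleGraph.mem_edgeFinset.mp he)
    calc 2 = #{m, T.pair m} := (card_pair fun h => hm h.symm).symm
      _ ≤ _ := card_le_card (pair_subset_carriers (mem_filter.mpr ⟨mem_univ _, hm⟩))

theorem reachable_deleteEdges_of_adjAvoid {v w x y : T.V}
    (h : Relation.ReflTransGen (T.AdjAvoid v) x y) :
    (T.toSimpleGraph.deleteEdges {s(v, w)}).Reachable x y := by
  refine SimpleGraph.reachable_of_reflTransGen (fun a b ⟨ha, hb, hab⟩ hne => ?_) h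
  refine SimpleGraph.deleteEdges_adj.mpr ⟨toSimpleGraph_adj.mpr ⟨hne, hab⟩, ?_⟩
  simp [ha, hb]

theorem ne_of_reflTransGen_adjAvoid {v x y : T.V} (h : Relation.ReflTransGen (T.AdjAvoid v) x y)
    (hx : x ≠ v) : y ≠ v := by
  rcases h.cases_tail with rfl | ⟨_, _, hstep⟩
  exacts [hx, hstep.2.1]

variable (T) in
noncomputable def side (h : T.H) : Finset T.V :=
  univ.filter (Relation.ReflTransGen (T.AdjAvoid (T.base (T.pair h))) (T.base h))

namespace IsStableTree

theorem edgeOf_mem_edgeFinset (hT : T.IsStableTree) {m : T.H} (hm : T.pair m ≠ m) :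
    T.edgeOf m ∈ T.toSimpleGraph.edgeFinset :=
  SimpleGraph.mem_edgeFinset.mpr (toSimpleGraph_adj.mpr ⟨(hT.1 m hm).symm, m, hm, rfl, rfl⟩)

theorem connected (hT : T.IsStableTree) : T.toSimpleGraph.Connected :=
  have : Nonempty T.V := Fintype.card_pos_iff.mp (by have := hT.2.2.1; omega)
  ⟨fun v w => SimpleGraph.reachable_of_reflTransGen
    (fun _ _ hab hne => toSimpleGraph_adj.mpr ⟨hne, hab⟩) (hT.2.1 v w)⟩

theorem card_nonLegs_add_two (hT : T.IsStableTree) :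
    #T.nonLegs + 2 = 2 * Fintype.card T.V := by
  rw [nonLegs, ← Fintype.card_subtype]
  exact hT.2.2.1

theorem card_nonLegs_eq_sum (hT : T.IsStableTree) :
    #T.nonLegs = ∑ e ∈ T.toSimpleGraph.edgeFinset, #(T.carriers e) :=
  card_eq_sum_card_fiberwise fun _ hm => hT.edgeOf_mem_edgeFinset (mem_filter.mp hm).2

/-- Every edge of the simple graph has at least two carriers, while a connected graph has at
least `|V| - 1` edges: the count `#nonLegs + 2 = 2 |V|` leaves no room for more. -/
theorem card_nonLegs (hT : T.IsStableTree) :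
    #T.nonLegs = 2 * #T.toSimpleGraph.edgeFinset := by
  have hge : 2 * #T.toSimpleGraph.edgeFinset ≤ #T.nonLegs := by
    rw [hT.card_nonLegs_eq_sum, mul_comm, ← smul_eq_mul, ← sum_const]
    exact sum_le_sum fun e he => two_le_card_carriers he
  have hle : Fintype.card T.V ≤ #T.toSimpleGraph.edgeFinset + 1 := by
    have := hT.connected.card_vert_le_card_edgeSet_add_one
    rwa [Nat.card_eq_fintype_card, Nat.card_eq_fintype_card,
      ← SimpleGraph.edgeFinset_card] at this
  have := hT.card_nonLegs_add_two
  omega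

theorem isTree (hT : T.IsStableTree) : T.toSimpleGraph.IsTree := by
  refine SimpleGraph.isTree_iff_connected_and_card.mpr ⟨hT.connected, ?_⟩
  rw [Nat.card_eq_fintype_card, Nat.card_eq_fintype_card, ← SimpleGraph.edgeFinset_card]
  have := hT.card_nonLegs_add_two
  have := hT.card_nonLegs
  omega

theorem card_carriers (hT : T.IsStableTree) {e : Sym2 T.V}
    (he : e ∈ T.toSimpleGraph.edgeFinset) : #(T.carriers e) = 2 := by
  have hsum : ∑ e ∈ T.toSimpleGraph.edgeFinset, 2 =
      ∑ e ∈ T.toSimpleGraph.edgeFinset, #(T.carriers e) := by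
    rw [← hT.card_nonLegs_eq_sum, hT.card_nonLegs, sum_const, smul_eq_mul, mul_comm]
  exact ((sum_eq_sum_iff_of_le fun _ he => two_le_card_carriers he).mp hsum e he).symm

theorem eq_of_base_eq_of_base_pair_eq (hT : T.IsStableTree) {m m' : T.H} (hm : T.pair m ≠ m)
    (hm' : T.pair m' ≠ m') (hbase : T.base m' = T.base m)
    (hbase_pair : T.base (T.pair m') = T.base (T.pair m)) : m' = m := by
  have hmN : m ∈ T.nonLegs := mem_filter.mpr ⟨mem_univ _, hm⟩
  have hcarriers := eq_of_subset_of_card_le (pair_subset_carriers hmN)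
    ((hT.card_carriers (hT.edgeOf_mem_edgeFinset hm)).trans (card_pair fun h => hm h.symm).symm).le
  have hm'N : m' ∈ T.carriers (T.edgeOf m) :=
    mem_filter.mpr
      ⟨mem_filter.mpr ⟨mem_univ _, hm'⟩, by rw [edgeOf, edgeOf, hbase, hbase_pair]⟩
  rw [← hcarriers, mem_insert, mem_singleton] at hm'N
  rcases hm'N with rfl | rfl
  · rfl
  · exact absurd hbase (hT.1 m hm)

/-- A path from `base (pair k)` to `base (pair h)` avoiding `v = base h`, preceded by the edge of
`k`, would show that the edge of `h` is not a bridge. -/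
theorem not_reflTransGen_adjAvoid (hT : T.IsStableTree) {h k : T.H} (hh : T.pair h ≠ h)
    (hk : T.pair k ≠ k) (hbk : T.base k = T.base h) (hkh : k ≠ h) :
    ¬ Relation.ReflTransGen (T.AdjAvoid (T.base h)) (T.base (T.pair k)) (T.base (T.pair h)) := by
  intro hreach
  have hne : T.base (T.pair k) ≠ T.base (T.pair h) := fun heq =>
    hkh (hT.eq_of_base_eq_of_base_pair_eq hh hk hbk heq)
  have hbridge := SimpleGraph.isAcyclic_iff_forall_isBridge.mp hT.isTree.isAcyclic
    (SimpleGraph.mem_edgeFinset.mp (hT.edgeOf_mem_edgeFinset hh))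
  refine SimpleGraph.isBridge_iff.mp hbridge
    ((SimpleGraph.Adj.reachable ?_).trans (reachable_deleteEdges_of_adjAvoid hreach))
  refine SimpleGraph.deleteEdges_adj.mpr
    ⟨hbk ▸ SimpleGraph.mem_edgeFinset.mp (hT.edgeOf_mem_edgeFinset hk), ?_⟩
  simp [hne, (hT.1 h hh).symm]

theorem side_pair_ssubset (hT : T.IsStableTree) {h k : T.H} (hh : T.pair h ≠ h)
    (hk : T.pair k ≠ k) (hbk : T.base k = T.base h) (hkh : k ≠ h) :
    T.side (T.pair k) ⊂ T.side h := by
  have hsep := hT.not_reflTransGen_adjAvoid hh hk hbk hkh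
  have hloop_k : T.base (T.pair k) ≠ T.base h := hbk ▸ hT.1 k hk
  simp only [side, T.pair_invol, hbk]
  refine ssubset_iff_of_subset (fun w hw => ?_) |>.mpr ⟨T.base h, ?_, ?_⟩
  · rw [mem_filter] at hw
    obtain ⟨-, hw⟩ := hw
    refine mem_filter.mpr ⟨mem_univ _, ?_⟩
    induction hw with
    | refl =>
      exact .single ⟨(hT.1 h hh).symm, fun hu => hsep (hu ▸ .refl), k, hk, hbk, rfl⟩
    | tail hux hxy ih =>
      exact ih.tail ⟨fun hu => hsep (hu ▸ hux), fun hu => hsep (hu ▸ hux.tail hxy), hxy.2.2⟩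
  · exact mem_filter.mpr ⟨mem_univ _, .refl⟩
  · simpa only [mem_filter, mem_univ, true_and] using
      fun hreach => ne_of_reflTransGen_adjAvoid hreach hloop_k rfl

end IsStableTree

end BMarkedGraph

variable {B A : Type} [Fintype B] [DecidableEq B] [Fintype A] [DecidableEq A]

theorem prodAlong_congr {H : Type} {d : ℕ} {ord : Equiv.Perm H}
    {mon₁ mon₂ : H → Equiv.Perm (Fin d)} {n : ℕ} {h : H}
    (hmon : ∀ i < n, mon₁ ((ord ^ i) h) = mon₂ ((ord ^ i) h)) :
    prodAlong ord mon₁ h n = prodAlong ord mon₂ h n := by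
  induction n generalizing h with
  | zero => rfl
  | succ n ih =>
    have hshift : ∀ i < n, mon₁ ((ord ^ i) (ord h)) = mon₂ ((ord ^ i) (ord h)) :=
      fun i hi => by simpa [pow_succ] using hmon (i + 1) (by omega)
    simp only [prodAlong, ih hshift, show mon₁ h = mon₂ h by simpa using hmon 0 (by omega)]

theorem eq_of_prodAlong_eq_one {H : Type} {d : ℕ} {ord : Equiv.Perm H}
    {mon₁ mon₂ : H → Equiv.Perm (Fin d)} {n : ℕ} {h : H} (hn : 0 < n)
    (h₁ : prodAlong ord mon₁ h n = 1) (h₂ : prodAlong ord mon₂ h n = 1)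
    (hmon : ∀ i, 0 < i → i < n → mon₁ ((ord ^ i) h) = mon₂ ((ord ^ i) h)) :
    mon₁ h = mon₂ h := by
  obtain ⟨n, rfl⟩ : ∃ m, n = m + 1 := ⟨n - 1, by omega⟩
  have hrest : prodAlong ord mon₁ (ord h) n = prodAlong ord mon₂ (ord h) n :=
    prodAlong_congr fun i hi => by simpa [pow_succ] using hmon (i + 1) (by omega) (by omega)
  rw [prodAlong, hrest] at h₁
  rw [prodAlong] at h₂
  exact mul_left_cancel (h₁.trans h₂.symm)

theorem IsDecoration.mon_eq_of_forall_ne {P : Portrait B A} {T : BMarkedGraph B}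
    {D₁ D₂ : PreDecoration P T} (hD₁ : IsDecoration P T D₁) (hD₂ : IsDecoration P T D₂)
    (hord : D₁.ord = D₂.ord) (h : T.H)
    (hmon : ∀ k, T.base k = T.base h → k ≠ h → D₁.mon k = D₂.mon k) :
    D₁.mon h = D₂.mon h := by
  have hbase : ∀ i : ℕ, T.base ((D₁.ord ^ i) h) = T.base h := by
    intro i
    induction i with
    | zero => rfl
    | succ i ih => rw [pow_succ', Equiv.Perm.mul_apply, hD₁.1, ih]
  have hpos := MulAction.period_pos_of_orderOf_pos (orderOf_pos D₁.ord) h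
  have hper : (D₁.ord ^ MulAction.period D₁.ord h) h = h := MulAction.pow_period_smul D₁.ord h
  have hne : ∀ i, 0 < i → i < MulAction.period D₁.ord h → (D₁.ord ^ i) h ≠ h :=
    fun _ hi hin => MulAction.pow_smul_ne_of_lt_period hi hin
  generalize MulAction.period D₁.ord h = n at hpos hper hne
  refine eq_of_prodAlong_eq_one hpos (hD₁.2.2.1 h n hper)
    (hord ▸ hD₂.2.2.1 h n (hord ▸ hper)) fun i hi hin => hmon _ (hbase i) (hne i hi hin)

theorem decoration_determined_by_legs_general (P : Portrait B A) (T : BMarkedGraph B)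
    (hT : T.IsStableTree) (D₁ D₂ : PreDecoration P T)
    (hD₁ : IsDecoration P T D₁) (hD₂ : IsDecoration P T D₂)
    (hord : D₁.ord = D₂.ord)
    (hleg : ∀ b : B, D₁.mon (T.leg b) = D₂.mon (T.leg b)) :
    ∀ h : T.H, D₁.mon h = D₂.mon h := by
  have hlegs : ∀ k, T.pair k = k → D₁.mon k = D₂.mon k := fun k hk => by
    obtain ⟨b, rfl⟩ := T.leg_of_fixed k hk
    exact hleg b
  intro h
  induction h using (measure fun h => (T.side h).card).wf.induction with
  | _ h ih =>
  by_cases hh : T.pair h = h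
  · exact hlegs h hh
  refine hD₁.mon_eq_of_forall_ne hD₂ hord h fun k hbk hkh => ?_
  by_cases hk : T.pair k = k
  · exact hlegs k hk
  have hpair := ih (T.pair k) (Finset.card_lt_card (hT.side_pair_ssubset hh hk hbk hkh))
  rwa [hD₁.2.2.2.1 k hk, hD₂.2.2.2.1 k hk, inv_inj] at hpair

/-- A `P`-decoration of a `B`-marked stable tree is determined by its
cyclic-order datum, its leg permutations and its cycle labelling: two decorations with the
same `ord`, the same `cyc` and the same permutations on all legs have the same
permutations on all half-edges. -/
theorem decoration_determined_by_legs (P : Portrait B A) (T : BMarkedGraph B)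
    (hT : T.IsStableTree) (D₁ D₂ : PreDecoration P T)
    (hD₁ : IsDecoration P T D₁) (hD₂ : IsDecoration P T D₂)
    (hord : D₁.ord = D₂.ord) (hcyc : D₁.cyc = D₂.cyc)
    (hleg : ∀ b : B, D₁.mon (T.leg b) = D₂.mon (T.leg b)) :
    ∀ h : T.H, D₁.mon h = D₂.mon h :=
  decoration_determined_by_legs_general P T hT D₁ D₂ hD₁ hD₂ hord hleg
end
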